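/- More generally, for s ≥ 2 the iterated integral of w_s = (dt/t)^{∧(s−1)} ∧ dt/(1−t) over the simplex 0 < t_s < … < t₁ < 1 equals ζ(s): ∫_{0<t_s<…<t₁<1} (1/(t₁ t₂ ⋯ t_{s−1})) · (1/(1−t_s)) dt₁⋯dt_s = Σ_{n≥1} n^{−s}. -/

import Mathlib

/-!
Expanding `(1 - t_k)⁻¹ = ∑ₙ t_kⁿ` turns the integrand into a sum of the monomials
`t₀⁻¹ ⋯ t_{k-1}⁻¹ t_kⁿ`. Over the simplex `x > t₀ > ⋯ > t_k > 0` such a monomial integrates to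
`x^(n+1) / (n+1)^(k+1)`: integrating out `t₁, …, t_k` first leaves `t₀⁻¹ t₀^(n+1) / (n+1)^k`,
and the last integration over `t₀ ∈ (0, x)` contributes one more factor `1/(n+1)`. At `x = 1`
the `n`-th term is `(n+1)^-(k+1)`; working with lower Lebesgue integrals of nonnegative functions,
the interchange of sum and integral is monotone convergence.
-/

open MeasureTheory Set

theorem lintegral_fin_cons {α : Type*} [MeasureSpace α] [SigmaFinite (volume : Measure α)]
    (k : ℕ) {f : (Fin (k + 1) → α) → ENNReal} (hf : Measurable f) :
    ∫⁻ t, f t = ∫⁻ a, ∫⁻ y, f (Fin.cons a y) := by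
  have he := (volume_preserving_piFinSuccAbove (fun _ : Fin (k + 1) => α) 0).symm
  rw [← he.lintegral_comp hf, Measure.volume_eq_prod,
    lintegral_prod (fun z => f ((MeasurableEquiv.piFinSuccAbove (fun _ => α) 0).symm z))
      (hf.comp (MeasurableEquiv.measurable _)).aemeasurable]
  simp only [MeasurableEquiv.piFinSuccAbove_symm_apply, Fin.insertNthEquiv, Equiv.coe_fn_mk,
    Fin.insertNth_zero']

def descSimplex (m : ℕ) (x : ℝ) : Set (Fin m → ℝ) := {t | (∀ i, t i ∈ Ioo 0 x) ∧ StrictAnti t}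

theorem measurableSet_descSimplex (m : ℕ) (x : ℝ) : MeasurableSet (descSimplex m x) := by
  simp only [descSimplex, StrictAnti, ofPred_and, ofPred_forall]
  refine .inter (.iInter fun i => measurableSet_Ioo.preimage (measurable_pi_apply i)) ?_
  refine .iInter fun i => .iInter fun j => ?_
  by_cases h : i < j
  · simpa [h] using measurableSet_lt (measurable_pi_apply j) (measurable_pi_apply i)
  · simp [h]

theorem cons_mem_descSimplex_iff {k : ℕ} {x a : ℝ} {y : Fin k → ℝ} :
    Fin.cons a y ∈ descSimplex (k + 1) x ↔ a ∈ Ioo 0 x ∧ y ∈ descSimplex k a := by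
  have hanti : StrictAnti (Fin.cons a y : Fin (k + 1) → ℝ) ↔ (∀ j, y j < a) ∧ StrictAnti y :=
    Fin.strictMono_cons (α := ℝᵒᵈ)
  simp only [descSimplex, mem_ofPred_eq, Fin.forall_fin_succ, Fin.cons_zero, Fin.cons_succ, hanti,
    mem_Ioo]
  constructor
  · rintro ⟨⟨ha, hy⟩, hlt, hy'⟩
    exact ⟨ha, fun j => ⟨(hy j).1, hlt j⟩, hy'⟩
  · rintro ⟨ha, hy, hy'⟩
    exact ⟨⟨ha, fun j => ⟨(hy j).1, (hy j).2.trans ha.2⟩⟩, fun j => (hy j).2, hy'⟩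

theorem setLIntegral_descSimplex_succ (k : ℕ) (x : ℝ) {f : (Fin (k + 1) → ℝ) → ENNReal}
    (hf : Measurable f) :
    ∫⁻ t in descSimplex (k + 1) x, f t =
      ∫⁻ a in Ioo 0 x, ∫⁻ y in descSimplex k a, f (Fin.cons a y) := by
  rw [← lintegral_indicator (measurableSet_descSimplex _ _),
    lintegral_fin_cons k (hf.indicator (measurableSet_descSimplex _ _)),
    ← lintegral_indicator measurableSet_Ioo]
  congr 1 with a
  by_cases ha : a ∈ Ioo 0 x
  · rw [indicator_of_mem ha, ← lintegral_indicator (measurableSet_descSimplex _ _)]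
    congr 1 with y
    by_cases hy : y ∈ descSimplex k a
    · rw [indicator_of_mem hy, indicator_of_mem (cons_mem_descSimplex_iff.2 ⟨ha, hy⟩)]
    · rw [indicator_of_notMem hy,
        indicator_of_notMem (hy ∘ fun h => (cons_mem_descSimplex_iff.1 h).2)]
  · simp [indicator, cons_mem_descSimplex_iff, ha]

theorem Fin.prod_univ_erase_last {M : Type*} [CommMonoid M] {k : ℕ} (f : Fin (k + 1) → M) :
    ∏ i ∈ Finset.univ.erase (Fin.last k), f i = ∏ i : Fin k, f i.castSucc := by
  rw [← Finset.compl_singleton, ← Fin.image_castSucc,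
    Finset.prod_image fun i _ j _ h => Fin.castSucc_injective _ h]

theorem lintegral_Ioo_pow_mul (n : ℕ) {x C : ℝ} (hx : 0 ≤ x) (hC : 0 ≤ C) :
    ∫⁻ a in Ioo 0 x, ENNReal.ofReal (a ^ n * C) = ENNReal.ofReal (x ^ (n + 1) / (n + 1) * C) := by
  have hint : IntegrableOn (fun a : ℝ => a ^ n * C) (Ioo 0 x) :=
    ((intervalIntegral.intervalIntegrable_pow n).1.mono_set Ioo_subset_Ioc_self).mul_const C
  have hnonneg : 0 ≤ᵐ[volume.restrict (Ioo 0 x)] fun a => a ^ n * C :=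
    (ae_restrict_iff' measurableSet_Ioo).2 <| ae_of_all _ fun a ha =>
      mul_nonneg (pow_nonneg ha.1.le n) hC
  rw [← ofReal_integral_eq_lintegral_ofReal hint hnonneg,
    integral_mul_const, ← integral_Ioc_eq_integral_Ioo, ← intervalIntegral.integral_of_le hx,
    integral_pow]
  ring_nf

noncomputable def invProdMulPow (k n : ℕ) (t : Fin (k + 1) → ℝ) : ℝ :=
  (∏ i : Fin k, (t i.castSucc)⁻¹) * t (Fin.last k) ^ n

theorem measurable_invProdMulPow (k n : ℕ) : Measurable (invProdMulPow k n) := by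
  unfold invProdMulPow; fun_prop

theorem invProdMulPow_zero (n : ℕ) (t : Fin 1 → ℝ) : invProdMulPow 0 n t = t 0 ^ n := by
  simp [invProdMulPow]

theorem invProdMulPow_cons (k n : ℕ) (a : ℝ) (y : Fin (k + 1) → ℝ) :
    invProdMulPow (k + 1) n (Fin.cons a y) = a⁻¹ * invProdMulPow k n y := by
  simp only [invProdMulPow, Fin.prod_univ_succ, ← Fin.succ_castSucc, ← Fin.succ_last,
    Fin.cons_succ, Fin.castSucc_zero, Fin.cons_zero, mul_assoc]

theorem setLIntegral_descSimplex_invProdMulPow (k n : ℕ) {x : ℝ} (hx : 0 ≤ x) :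
    ∫⁻ t in descSimplex (k + 1) x, ENNReal.ofReal (invProdMulPow k n t) =
      ENNReal.ofReal (x ^ (n + 1) / ((n : ℝ) + 1) ^ (k + 1)) := by
  induction k generalizing x with
  | zero =>
    rw [setLIntegral_descSimplex_succ 0 x (measurable_invProdMulPow 0 n).ennreal_ofReal]
    have hvol : ∀ a, volume (descSimplex 0 a) = 1 := fun a => by
      simp [descSimplex, Subsingleton.strictAnti, volume_pi]
    simpa [invProdMulPow_zero, hvol] using lintegral_Ioo_pow_mul n hx zero_le_one
  | succ k ih =>
    rw [setLIntegral_descSimplex_succ _ x (measurable_invProdMulPow _ n).ennreal_ofReal]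
    calc ∫⁻ a in Ioo 0 x, ∫⁻ y in descSimplex (k + 1) a,
            ENNReal.ofReal (invProdMulPow (k + 1) n (Fin.cons a y))
        = ∫⁻ a in Ioo 0 x, ENNReal.ofReal (a ^ n * (((n : ℝ) + 1) ^ (k + 1))⁻¹) := by
          refine setLIntegral_congr_fun measurableSet_Ioo fun a ha => ?_
          simp_rw [invProdMulPow_cons, ENNReal.ofReal_mul (inv_nonneg.2 ha.1.le)]
          rw [lintegral_const_mul _ (measurable_invProdMulPow k n).ennreal_ofReal, ih ha.1.le,
            ← ENNReal.ofReal_mul (inv_nonneg.2 ha.1.le)]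
          have : a ≠ 0 := ha.1.ne'
          congr 1
          field_simp
          ring
      _ = _ := by
          rw [lintegral_Ioo_pow_mul n hx (by positivity)]
          congr 1
          field_simp
          ring

theorem invProdMulPow_nonneg (k n : ℕ) {t : Fin (k + 1) → ℝ} (ht : ∀ i, 0 ≤ t i) :
    0 ≤ invProdMulPow k n t :=
  mul_nonneg (Finset.prod_nonneg fun _ _ => inv_nonneg.2 (ht _)) (pow_nonneg (ht _) n)

theorem hasSum_invProdMulPow (k : ℕ) {t : Fin (k + 1) → ℝ} (h0 : 0 ≤ t (Fin.last k))
    (h1 : t (Fin.last k) < 1) :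
    HasSum (fun n => invProdMulPow k n t)
      ((∏ i : Fin k, (t i.castSucc)⁻¹) * (1 - t (Fin.last k))⁻¹) :=
  (hasSum_geometric_of_lt_one h0 h1).mul_left _

theorem setLIntegral_descSimplex_one (k : ℕ) :
    ∫⁻ t in descSimplex (k + 1) 1,
        ENNReal.ofReal ((∏ i : Fin k, (t i.castSucc)⁻¹) * (1 - t (Fin.last k))⁻¹) =
      ∑' n : ℕ, ENNReal.ofReal ((((n : ℝ) + 1) ^ (k + 1))⁻¹) := by
  have hexpand : ∀ t ∈ descSimplex (k + 1) 1,
      ENNReal.ofReal ((∏ i : Fin k, (t i.castSucc)⁻¹) * (1 - t (Fin.last k))⁻¹) =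
        ∑' n : ℕ, ENNReal.ofReal (invProdMulPow k n t) := fun t ht => by
    have hpos : ∀ i, 0 ≤ t i := fun i => (ht.1 i).1.le
    have hsum := hasSum_invProdMulPow k (hpos _) (ht.1 _).2
    rw [← hsum.tsum_eq, ENNReal.ofReal_tsum_of_nonneg (fun n => invProdMulPow_nonneg k n hpos)
      hsum.summable]
  rw [setLIntegral_congr_fun (measurableSet_descSimplex _ _) hexpand,
    lintegral_tsum fun n => (measurable_invProdMulPow k n).ennreal_ofReal.aemeasurable]
  refine tsum_congr fun n => ?_
  rw [setLIntegral_descSimplex_invProdMulPow k n zero_le_one, one_pow, one_div]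

/-- Euler/Kontsevich iterated integral representation of `ζ(s)` for `s ≥ 2`:
the integral of `(1/(t₁ t₂ ⋯ t_{s−1})) · (1/(1−t_s))` over the open simplex
`{0 < t_s < ⋯ < t₁ < 1} ⊂ ℝ^s` equals `Σ_{n≥1} n^{−s}`.  Here `t : Fin s → ℝ`
lists the coordinates in decreasing order, so `t_s` is the last one. -/
theorem zeta_iterated_integral (s : ℕ) (hs : 2 ≤ s) :
    (∫ t in {t : Fin s → ℝ |
        (∀ i, 0 < t i ∧ t i < 1) ∧ ∀ i j : Fin s, i < j → t j < t i},
        (∏ i ∈ Finset.univ.erase (Fin.last (s - 1)), (t (Fin.cast (by omega) i))⁻¹) *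
          (1 - t (Fin.cast (by omega) (Fin.last (s - 1))))⁻¹)
      = ∑' n : ℕ, (((n : ℝ) + 1) ^ s)⁻¹ := by
  obtain ⟨k, rfl⟩ : ∃ k, s = k + 1 := ⟨s - 1, by omega⟩
  -- with `s = k + 1` the casts `Fin.cast _` reduce to the identity
  change ∫ t in descSimplex (k + 1) 1,
    (∏ i ∈ Finset.univ.erase (Fin.last k), (t i)⁻¹) * (1 - t (Fin.last k))⁻¹ = _
  simp_rw [Fin.prod_univ_erase_last]
  have hnonneg : ∀ᵐ t ∂(volume.restrict (descSimplex (k + 1) 1)),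
      0 ≤ (∏ i : Fin k, (t i.castSucc)⁻¹) * (1 - t (Fin.last k))⁻¹ :=
    (ae_restrict_iff' (measurableSet_descSimplex _ _)).2 <| ae_of_all _ fun t ht =>
      mul_nonneg (Finset.prod_nonneg fun _ _ => inv_nonneg.2 (ht.1 _).1.le)
        (inv_nonneg.2 (sub_nonneg.2 (ht.1 _).2.le))
  rw [integral_eq_lintegral_of_nonneg_ae hnonneg (by fun_prop), setLIntegral_descSimplex_one,
    ENNReal.tsum_toReal_eq fun _ => ENNReal.ofReal_ne_top]
  exact tsum_congr fun n => ENNReal.toReal_ofReal (by positivity)
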